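/- arXiv:1411.6788 — 4 statements merged into one kernel-verified Lean document; each statement's English description precedes it below -/
import Mathlib

section
/- Let P₁, Q₁, Q₀ be polynomials over ℂ with deg P₁ = 1, deg Q₁ = 1, deg Q₀ = 0, and let Π₄ be a monic polynomial of degree 4. Set P₂ := Q₁P₁ + Q₀ and suppose deg(P₂³ - Π₄P₁²) ≤ 4. Then the polynomial Q₂ := P₁Q₁³ - Π₄ has degree at most 2. -/
open Polynomial

theorem Q2_degree (Pi4 P₁ Q₁ Q₀ : Polynomial ℂ)
    (hPim : Pi4.Monic) (hPid : Pi4.natDegree = 4)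
    (hP₁ : P₁.natDegree = 1) (hQ₁ : Q₁.natDegree = 1) (hQ₀ : Q₀.natDegree = 0)
    (hD : (((Q₁ * P₁ + Q₀) ^ 3 - Pi4 * P₁ ^ 2)).degree ≤ 4) :
    ((P₁ * Q₁ ^ 3 - Pi4)).degree ≤ 2 := by
  have hP₁0 : P₁ ≠ 0 := fun h => by simp [h] at hP₁
  have key : P₁ ^ 2 * (P₁ * Q₁ ^ 3 - Pi4) =
      ((Q₁ * P₁ + Q₀) ^ 3 - Pi4 * P₁ ^ 2) -
        (3 * Q₁ ^ 2 * P₁ ^ 2 * Q₀ + 3 * Q₁ * P₁ * Q₀ ^ 2 + Q₀ ^ 3) := by ring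
  have n3 : (3 : Polynomial ℂ).natDegree = 0 := natDegree_ofNat 3
  have hnE : (3 * Q₁ ^ 2 * P₁ ^ 2 * Q₀ + 3 * Q₁ * P₁ * Q₀ ^ 2 + Q₀ ^ 3).natDegree ≤ 4 := by
    have e0 := natDegree_add_le (3 * Q₁ ^ 2 * P₁ ^ 2 * Q₀ + 3 * Q₁ * P₁ * Q₀ ^ 2) (Q₀ ^ 3)
    have e0' := natDegree_add_le (3 * Q₁ ^ 2 * P₁ ^ 2 * Q₀) (3 * Q₁ * P₁ * Q₀ ^ 2)
    have e1 := natDegree_mul_le (p := 3 * Q₁ ^ 2 * P₁ ^ 2) (q := Q₀)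
    have e2 := natDegree_mul_le (p := 3 * Q₁ ^ 2) (q := P₁ ^ 2)
    have e3 := natDegree_mul_le (p := (3 : Polynomial ℂ)) (q := Q₁ ^ 2)
    have e4 := natDegree_mul_le (p := 3 * Q₁ * P₁) (q := Q₀ ^ 2)
    have e5 := natDegree_mul_le (p := 3 * Q₁) (q := P₁)
    have e6 := natDegree_mul_le (p := (3 : Polynomial ℂ)) (q := Q₁)
    have p1 : (Q₁ ^ 2).natDegree = 2 := by rw [natDegree_pow, hQ₁]
    have p2 : (P₁ ^ 2).natDegree = 2 := by rw [natDegree_pow, hP₁]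
    have p3 : (Q₀ ^ 2).natDegree = 0 := by rw [natDegree_pow, hQ₀]
    have p4 : (Q₀ ^ 3).natDegree = 0 := by rw [natDegree_pow, hQ₀]
    omega
  have hE : (3 * Q₁ ^ 2 * P₁ ^ 2 * Q₀ + 3 * Q₁ * P₁ * Q₀ ^ 2 + Q₀ ^ 3).degree ≤ 4 := by
    refine le_trans degree_le_natDegree ?_
    exact_mod_cast hnE
  have hLHS : (P₁ ^ 2 * (P₁ * Q₁ ^ 3 - Pi4)).degree ≤ 4 := by
    rw [key]
    exact le_trans (degree_sub_le _ _) (max_le hD hE)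
  by_cases h0 : P₁ * Q₁ ^ 3 - Pi4 = 0
  · simp [h0]
  · have hne : P₁ ^ 2 * (P₁ * Q₁ ^ 3 - Pi4) ≠ 0 := mul_ne_zero (pow_ne_zero _ hP₁0) h0
    rw [degree_eq_natDegree hne] at hLHS
    have h4 : (P₁ ^ 2 * (P₁ * Q₁ ^ 3 - Pi4)).natDegree ≤ 4 := by exact_mod_cast hLHS
    rw [natDegree_mul (pow_ne_zero _ hP₁0) h0, natDegree_pow, hP₁] at h4
    rw [degree_eq_natDegree h0]
    exact_mod_cast (by omega : (P₁ * Q₁ ^ 3 - Pi4).natDegree ≤ 2)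
end

section
/- Let h, z ∈ ℂ with h ≠ 0, Π₄(z) ≠ 0, and suppose h³ - 3(P₂(z)/Π₄(z))h + 2(P₁(z)/Π₄(z)) = 0, where Π₄ is a monic quartic with coefficients s₁,...,s₄, P₁(x) = x - c, P₂(x) = x² - ((s₁+2c)/3)x + d. Define R := z - 1/h and Δ := (2K₂(R))/h + Π₄'(R), with K₂(x) := 3x² + 2(c-s₁)x - 3d + s₂. Then Δ² = (Π₄'(R))² - 4Π₄(R)K₂(R). -/
/-- Forward direction of the hyperelliptic uniformization (Theorem 1). -/
theorem uniformization_forward (s₁ s₂ s₃ s₄ c d : ℂ)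
    (Pi4 : ℂ → ℂ) (hPi : ∀ x, Pi4 x = x ^ 4 - s₁ * x ^ 3 + s₂ * x ^ 2 - s₃ * x + s₄)
    (Pi4' : ℂ → ℂ) (hPi' : ∀ x, Pi4' x = 4 * x ^ 3 - 3 * s₁ * x ^ 2 + 2 * s₂ * x - s₃)
    (P₁ : ℂ → ℂ) (hP₁ : ∀ x, P₁ x = x - c)
    (P₂ : ℂ → ℂ) (hP₂ : ∀ x, P₂ x = x ^ 2 - ((s₁ + 2 * c) / 3) * x + d)
    (K₂ : ℂ → ℂ) (hK₂ : ∀ x, K₂ x = 3 * x ^ 2 + 2 * (c - s₁) * x - 3 * d + s₂)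
    (z h : ℂ) (hh : h ≠ 0) (hPiz : Pi4 z ≠ 0)
    (hcurve : h ^ 3 - 3 * (P₂ z / Pi4 z) * h + 2 * (P₁ z / Pi4 z) = 0)
    (R Δ : ℂ) (hR : R = z - 1 / h) (hΔ : Δ = 2 * K₂ R / h + Pi4' R) :
    Δ ^ 2 = (Pi4' R) ^ 2 - 4 * Pi4 R * K₂ R := by
  have key : h ^ 3 * Pi4 z - 3 * P₂ z * h + 2 * P₁ z = 0 := by
    field_simp at hcurve; linear_combination hcurve
  have hRh : R * h = z * h - 1 := by
    rw [hR]; field_simp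
  have hΔ' : h * Δ = 2 * K₂ R + h * Pi4' R := by
    rw [hΔ]; field_simp
  have hB' : h * (K₂ R + h * Pi4' R + h ^ 2 * Pi4 R) = 0 := by
    rw [hK₂, hPi', hPi]
    rw [hPi, hP₁, hP₂] at key
    linear_combination key +
      (2*c + h*s₂ - 2*h*R*s₁ + 3*h*R^2 - h^2*s₃ + h^2*R*s₂ - h^2*R^2*s₁ + h^2*R^3
        - 2*z - z*h*s₁ + 2*z*h*R + z*h^2*s₂ - z*h^2*R*s₁ + z*h^2*R^2 + z^2*h
        - z^2*h^2*s₁ + z^2*h^2*R + z^3*h^2) * hRh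
  have hB : K₂ R + h * Pi4' R + h ^ 2 * Pi4 R = 0 :=
    (mul_eq_zero.mp hB').resolve_left hh
  have main : h ^ 2 * Δ ^ 2 = h ^ 2 * ((Pi4' R) ^ 2 - 4 * Pi4 R * K₂ R) := by
    linear_combination (h * Δ + 2 * K₂ R + h * Pi4' R) * hΔ' + 4 * K₂ R * hB
  exact mul_left_cancel₀ (pow_ne_zero 2 hh) main
end

section
/- With the notation of the hyperelliptic uniformization (Π₄ monic quartic, P₁(x)=x-c, P₂(x)=x²-((s₁+2c)/3)x+d, K₂(x)=3x²+2(c-s₁)x-3d+s₂), suppose R, Δ ∈ ℂ satisfy Δ² = (Π₄'(R))² - 4Π₄(R)K₂(R), with Π₄(R) ≠ 0 and K₂(R) ≠ 0. Define z := R + (-Π₄'(R) + Δ)/(2K₂(R)) and h := -(Π₄'(R) + Δ)/(2Π₄(R)). Then h³ - 3(P₂(z)/Π₄(z))h + 2(P₁(z)/Π₄(z)) = 0 (in particular Π₄(z) ≠ 0 may be assumed as a hypothesis or the identity holds after clearing denominators: Π₄(z)h³ - 3P₂(z)h + 2P₁(z) = 0 whenever Π₄(z) ≠ 0). -/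
/-- Inverse direction of the hyperelliptic uniformization (Theorem 1). -/
theorem uniformization_inverse (s₁ s₂ s₃ s₄ c d : ℂ)
    (Pi4 : ℂ → ℂ) (hPi : ∀ x, Pi4 x = x ^ 4 - s₁ * x ^ 3 + s₂ * x ^ 2 - s₃ * x + s₄)
    (Pi4' : ℂ → ℂ) (hPi' : ∀ x, Pi4' x = 4 * x ^ 3 - 3 * s₁ * x ^ 2 + 2 * s₂ * x - s₃)
    (P₁ : ℂ → ℂ) (hP₁ : ∀ x, P₁ x = x - c)
    (P₂ : ℂ → ℂ) (hP₂ : ∀ x, P₂ x = x ^ 2 - ((s₁ + 2 * c) / 3) * x + d)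
    (K₂ : ℂ → ℂ) (hK₂ : ∀ x, K₂ x = 3 * x ^ 2 + 2 * (c - s₁) * x - 3 * d + s₂)
    (R Δ : ℂ) (hcurve : Δ ^ 2 = (Pi4' R) ^ 2 - 4 * Pi4 R * K₂ R)
    (hPiR : Pi4 R ≠ 0) (hKR : K₂ R ≠ 0)
    (z h : ℂ) (hz : z = R + (-Pi4' R + Δ) / (2 * K₂ R))
    (hhdef : h = -(Pi4' R + Δ) / (2 * Pi4 R)) (hPiz : Pi4 z ≠ 0) :
    Pi4 z * h ^ 3 - 3 * P₂ z * h + 2 * P₁ z = 0 := by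
  set u : ℂ := z - R with hu_def
  have hu : K₂ R * u ^ 2 + Pi4' R * u + Pi4 R = 0 := by
    have : u = (-Pi4' R + Δ) / (2 * K₂ R) := by rw [hu_def, hz]; ring
    rw [this]
    field_simp
    ring_nf
    linear_combination hcurve
  have hh : h * u = 1 := by
    have hu' : u = (-Pi4' R + Δ) / (2 * K₂ R) := by rw [hu_def, hz]; ring
    rw [hhdef, hu']
    field_simp
    linear_combination -hcurve
  have hune : u ≠ 0 := by
    intro h0
    rw [h0, mul_zero] at hh
    exact zero_ne_one hh
  have key : (Pi4 z * h ^ 3 - 3 * P₂ z * h + 2 * P₁ z) * u ^ 3 = 0 := by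
    rw [hPi z, hPi R, hPi' R, hK₂ R, hP₂ z, hP₁ z] at *
    linear_combination ((z ^ 4 - s₁ * z ^ 3 + s₂ * z ^ 2 - s₃ * z + s₄) *
        ((h * u) ^ 2 + h * u + 1) - 3 * (z ^ 2 - ((s₁ + 2 * c) / 3) * z + d) * u ^ 2) * hh + hu
  have := mul_eq_zero.mp key
  rcases this with h1 | h2
  · exact h1
  · exact absurd h2 (pow_ne_zero 3 hune)
end

section
/- The two maps (z,h) ↦ (R,Δ) = (z - 1/h, 2K₂(z - 1/h)/h + Π₄'(z - 1/h)) and (R,Δ) ↦ (z,h) = (R + (-Π₄'(R)+Δ)/(2K₂(R)), -(Π₄'(R)+Δ)/(2Π₄(R))) are mutually inverse on points where h ≠ 0, Π₄(R) ≠ 0, K₂(R) ≠ 0 and the curve equations hold. -/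
/-- The two maps of Theorem 1 are mutually inverse. -/
theorem uniformization_mutually_inverse (s₁ s₂ s₃ s₄ c d : ℂ)
    (Pi4 : ℂ → ℂ) (hPi : ∀ x, Pi4 x = x ^ 4 - s₁ * x ^ 3 + s₂ * x ^ 2 - s₃ * x + s₄)
    (Pi4' : ℂ → ℂ) (hPi' : ∀ x, Pi4' x = 4 * x ^ 3 - 3 * s₁ * x ^ 2 + 2 * s₂ * x - s₃)
    (P₁ : ℂ → ℂ) (hP₁ : ∀ x, P₁ x = x - c)
    (P₂ : ℂ → ℂ) (hP₂ : ∀ x, P₂ x = x ^ 2 - ((s₁ + 2 * c) / 3) * x + d)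
    (K₂ : ℂ → ℂ) (hK₂ : ∀ x, K₂ x = 3 * x ^ 2 + 2 * (c - s₁) * x - 3 * d + s₂) :
    (∀ z h : ℂ, h ≠ 0 →
      Pi4 z * h ^ 3 - 3 * P₂ z * h + 2 * P₁ z = 0 →
      Pi4 (z - 1 / h) ≠ 0 → K₂ (z - 1 / h) ≠ 0 →
      ((z - 1 / h) + (-Pi4' (z - 1 / h) + (2 * K₂ (z - 1 / h) / h + Pi4' (z - 1 / h))) /
          (2 * K₂ (z - 1 / h)) = z ∧
        -(Pi4' (z - 1 / h) + (2 * K₂ (z - 1 / h) / h + Pi4' (z - 1 / h))) /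
          (2 * Pi4 (z - 1 / h)) = h)) ∧
    (∀ R Δ : ℂ, Pi4 R ≠ 0 → K₂ R ≠ 0 →
      Δ ^ 2 = (Pi4' R) ^ 2 - 4 * Pi4 R * K₂ R →
      -(Pi4' R + Δ) / (2 * Pi4 R) ≠ 0 →
      ((R + (-Pi4' R + Δ) / (2 * K₂ R)) - 1 / (-(Pi4' R + Δ) / (2 * Pi4 R)) = R ∧
        2 * K₂ R / (-(Pi4' R + Δ) / (2 * Pi4 R)) + Pi4' R = Δ)) := by
  constructor
  · intro z h hh hcurve hP hK
    rw [hPi z, hP₁, hP₂] at hcurve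
    have e1 : h * (z - 1 / h) = h * z - 1 := by field_simp
    have e2 : h ^ 2 * (z - 1 / h) ^ 2 = (h * z - 1) ^ 2 := by
      rw [show h ^ 2 * (z - 1 / h) ^ 2 = (h * (z - 1 / h)) ^ 2 from by ring, e1]
    have e3 : h ^ 3 * (z - 1 / h) ^ 3 = (h * z - 1) ^ 3 := by
      rw [show h ^ 3 * (z - 1 / h) ^ 3 = (h * (z - 1 / h)) ^ 3 from by ring, e1]
    have e4 : h ^ 4 * (z - 1 / h) ^ 4 = (h * z - 1) ^ 4 := by
      rw [show h ^ 4 * (z - 1 / h) ^ 4 = (h * (z - 1 / h)) ^ 4 from by ring, e1]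
    have key : 2 * ((h * z - 1) ^ 4 - s₁ * (h * z - 1) ^ 3 * h + s₂ * (h * z - 1) ^ 2 * h ^ 2
          - s₃ * (h * z - 1) * h ^ 3 + s₄ * h ^ 4)
        + 2 * (4 * (h * z - 1) ^ 3 - 3 * s₁ * (h * z - 1) ^ 2 * h + 2 * s₂ * (h * z - 1) * h ^ 2
          - s₃ * h ^ 3)
        + 2 * (3 * (h * z - 1) ^ 2 + 2 * (c - s₁) * (h * z - 1) * h + (s₂ - 3 * d) * h ^ 2)
        = 0 := by linear_combination 2 * h * hcurve
    constructor
    · have hK' : 2 * K₂ (z - 1 / h) ≠ 0 := mul_ne_zero two_ne_zero hK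
      rw [show (-Pi4' (z - 1 / h) + (2 * K₂ (z - 1 / h) / h + Pi4' (z - 1 / h)))
          = 2 * K₂ (z - 1 / h) / h from by ring, div_div, mul_comm h (2 * K₂ (z - 1 / h)),
        ← div_div, div_self hK']
      ring
    · rw [div_eq_iff (mul_ne_zero two_ne_zero hP)]
      apply mul_right_cancel₀ (pow_ne_zero 3 hh)
      have hKh : 2 * K₂ (z - 1 / h) / h * h ^ 3 = 2 * K₂ (z - 1 / h) * h ^ 2 := by
        field_simp
      rw [show -(Pi4' (z - 1 / h) + (2 * K₂ (z - 1 / h) / h + Pi4' (z - 1 / h))) * h ^ 3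
          = -(2 * Pi4' (z - 1 / h) * h ^ 3) - 2 * K₂ (z - 1 / h) / h * h ^ 3 from by ring, hKh]
      rw [hPi, hPi', hK₂]
      linear_combination (-1) * key - 2 * e4 - (8 - 2 * s₁ * h) * e3
        - (2 * s₂ * h ^ 2 - 6 * s₁ * h + 6) * e2
        - (-2 * s₃ * h ^ 3 + 4 * s₂ * h ^ 2 + 4 * (c - s₁) * h) * e1
  · intro R Δ hP hK hcurve hh
    have hne : Pi4' R + Δ ≠ 0 := by
      intro h0
      exact hh (by rw [h0]; simp)
    have hne' : -(Pi4' R + Δ) ≠ 0 := neg_ne_zero.mpr hne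
    have hne2 : -Pi4' R - Δ ≠ 0 := by
      rw [show -Pi4' R - Δ = -(Pi4' R + Δ) from by ring]; exact hne'
    constructor
    · rw [one_div_div, div_neg, sub_neg_eq_add]
      field_simp
      linear_combination hcurve
    · rw [div_div_eq_mul_div, div_neg]
      field_simp
      linear_combination -hcurve
end
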